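/- arXiv:0911.5368 — 2 statements merged into one kernel-verified Lean document; each statement's English description precedes it below -/
import Mathlib

section
/- Suppose S_1 : ℂ → ℂ satisfies the screening difference equation S_1(u+2) = A_1(u+1)·S_1(u) for all u ∈ ℂ. Then for every u ∈ ℂ: (i) Y_1(u)·S_1(u) = (Y_2³(u+1)/Y_1(u+2))·S_1(u+2), and (ii) S_1(u)/Y_1(u) = (Y_1(u−2)/Y_2³(u−1))·S_1(u−2). (These say that the screening operator S_1, acting by the Leibniz rule with (S_1·Y_1)(u) = Y_1(u)S_1(u), annihilates H_1(u) = Y_1(u) + Y_2³(u+1)/Y_1(u+2) and K_1(u) = 1/Y_1(u) + Y_1(u−2)/Y_2³(u−1).) -/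
open Complex

theorem D34_screening_S1
    (hbar : ℂ) (hbar_ne : hbar ≠ 0) (t : ℂ)
    (ht : t = (Real.pi : ℂ) * Complex.I / (3 * hbar))
    (Q : ℕ → ℂ → ℂ)
    (hQne : ∀ a, 1 ≤ a → a ≤ 2 → ∀ u, Q a u ≠ 0)
    (hconst : ℕ → ℂ)
    (hQper : ∀ a, 1 ≤ a → a ≤ 2 → hconst a ≠ 0 ∧
      ∀ u, Q a (u + (Real.pi : ℂ) * Complex.I / hbar) = hconst a * Q a u)
    (Y : ℕ → ℂ → ℂ) (hY : ∀ a u, Y a u = Q a (u - 1) / Q a (u + 1))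
    (Y3 : ℕ → ℂ → ℂ) (hY3 : ∀ a u, Y3 a u = Y a u * Y a (u + t) * Y a (u + 2 * t))
    (Q3 : ℕ → ℂ → ℂ) (hQ3 : ∀ a u, Q3 a u = Q a u * Q a (u + t) * Q a (u + 2 * t))
    (A1 : ℂ → ℂ)
    (hA1 : ∀ u, A1 u = Q 1 (u - 2) / Q 1 (u + 2) * (Q3 2 (u + 1) / Q3 2 (u - 1)))
    (S1 : ℂ → ℂ) (hS1 : ∀ u : ℂ, S1 (u + 2) = A1 (u + 1) * S1 u)
    :
    (∀ u : ℂ, Y 1 u * S1 u = Y3 2 (u + 1) / Y 1 (u + 2) * S1 (u + 2)) ∧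
    (∀ u : ℂ, S1 u / Y 1 u = Y 1 (u - 2) / Y3 2 (u - 1) * S1 (u - 2)) := by
  have hQ1 : ∀ u, Q 1 u ≠ 0 := hQne 1 le_rfl one_le_two
  have hQ2 : ∀ u, Q 2 u ≠ 0 := hQne 2 one_le_two le_rfl
  have hQ3ne : ∀ v, Q3 2 v ≠ 0 := by
    intro v
    rw [hQ3]
    exact mul_ne_zero (mul_ne_zero (hQ2 _) (hQ2 _)) (hQ2 _)
  have hY1ne : ∀ v, Y 1 v ≠ 0 := by
    intro v
    rw [hY]
    exact div_ne_zero (hQ1 _) (hQ1 _)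
  have hY2ne : ∀ v, Y 2 v ≠ 0 := by
    intro v
    rw [hY]
    exact div_ne_zero (hQ2 _) (hQ2 _)
  have hY3ne : ∀ v, Y3 2 v ≠ 0 := by
    intro v
    rw [hY3]
    exact mul_ne_zero (mul_ne_zero (hY2ne _) (hY2ne _)) (hY2ne _)
  -- Y3 as a ratio of Q3's
  have hY3div : ∀ v : ℂ, Y3 2 v = Q3 2 (v - 1) / Q3 2 (v + 1) := by
    intro v
    simp only [hY3, hY, hQ3, div_mul_div_comm]
    ring_nf
  -- key identity (S1-free)
  have key : ∀ u : ℂ, A1 (u + 1) * (Y3 2 (u + 1) / Y 1 (u + 2)) = Y 1 u := by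
    intro u
    rw [hA1, hY3div, hY 1 (u + 2), hY 1 u]
    rw [show u + 1 - 2 = u - 1 by ring, show u + 1 + 2 = u + 3 by ring,
        show u + 1 - 1 = u by ring, show u + 1 + 1 = u + 2 by ring,
        show u + 2 - 1 = u + 1 by ring, show u + 2 + 1 = u + 3 by ring]
    have h1 := hQ1 (u - 1)
    have h2 := hQ1 (u + 1)
    have h3 := hQ1 (u + 3)
    have h4 := hQ3ne u
    have h5 := hQ3ne (u + 2)
    field_simp
  constructor
  · intro u
    rw [hS1 u, ← key u]
    ring
  · intro u
    have h := hS1 (u - 2)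
    rw [show u - 2 + 2 = u by ring, show u - 2 + 1 = u - 1 by ring] at h
    have k := key (u - 2)
    rw [show u - 2 + 1 = u - 1 by ring, show u - 2 + 2 = u by ring] at k
    rw [h, ← k]
    have h1 := hY1ne u
    have h2 := hY3ne (u - 1)
    field_simp
end

section
/- Suppose S_2 : ℂ → ℂ satisfies the screening difference equation S_2(u+2) = A_2(u+1)·S_2(u) for all u ∈ ℂ, and set Σ_2(u) := S_2(u) + S_2(u+t) + S_2(u+2t). Then for every u ∈ ℂ: (i) Y_2³(u)·Σ_2(u) = (Y_1³(u+1)/Y_2³(u+2))·Σ_2(u+2), and (ii) Σ_2(u)/Y_2³(u) = (Y_2³(u−2)/Y_1³(u−1))·Σ_2(u−2). (These say that the screening operator S_2, acting by the Leibniz rule with (S_2·Y_2³)(u) = Y_2³(u)Σ_2(u), annihilates H_2(u) = Y_2³(u) + Y_1³(u+1)/Y_2³(u+2) and K_2(u) = 1/Y_2³(u) + Y_2³(u−2)/Y_1³(u−1).) -/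
open Complex

theorem D34_screening_S2
    (hbar : ℂ) (hbar_ne : hbar ≠ 0) (t : ℂ)
    (ht : t = (Real.pi : ℂ) * Complex.I / (3 * hbar))
    (Q : ℕ → ℂ → ℂ)
    (hQne : ∀ a, 1 ≤ a → a ≤ 2 → ∀ u, Q a u ≠ 0)
    (hconst : ℕ → ℂ)
    (hQper : ∀ a, 1 ≤ a → a ≤ 2 → hconst a ≠ 0 ∧
      ∀ u, Q a (u + (Real.pi : ℂ) * Complex.I / hbar) = hconst a * Q a u)
    (Y : ℕ → ℂ → ℂ) (hY : ∀ a u, Y a u = Q a (u - 1) / Q a (u + 1))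
    (Y3 : ℕ → ℂ → ℂ) (hY3 : ∀ a u, Y3 a u = Y a u * Y a (u + t) * Y a (u + 2 * t))
    (Q3 : ℕ → ℂ → ℂ) (hQ3 : ∀ a u, Q3 a u = Q a u * Q a (u + t) * Q a (u + 2 * t))
    (A2 : ℂ → ℂ)
    (hA2 : ∀ u, A2 u = Q3 1 (u + 1) / Q3 1 (u - 1) * (Q3 2 (u - 2) / Q3 2 (u + 2)))
    (S2 : ℂ → ℂ) (hS2 : ∀ u : ℂ, S2 (u + 2) = A2 (u + 1) * S2 u)
    (Sig2 : ℂ → ℂ) (hSig2 : ∀ u : ℂ, Sig2 u = S2 u + S2 (u + t) + S2 (u + 2 * t))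
    :
    (∀ u : ℂ, Y3 2 u * Sig2 u = Y3 1 (u + 1) / Y3 2 (u + 2) * Sig2 (u + 2)) ∧
    (∀ u : ℂ, Sig2 u / Y3 2 u = Y3 2 (u - 2) / Y3 1 (u - 1) * Sig2 (u - 2)) := by
  have hQ1 : ∀ u, Q 1 u ≠ 0 := hQne 1 le_rfl one_le_two
  have hQ2 : ∀ u, Q 2 u ≠ 0 := hQne 2 one_le_two le_rfl
  have hQ31 : ∀ u, Q3 1 u ≠ 0 := fun u => by
    rw [hQ3]; exact mul_ne_zero (mul_ne_zero (hQ1 _) (hQ1 _)) (hQ1 _)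
  have hQ32 : ∀ u, Q3 2 u ≠ 0 := fun u => by
    rw [hQ3]; exact mul_ne_zero (mul_ne_zero (hQ2 _) (hQ2 _)) (hQ2 _)
  -- 3t equals the period
  have h3t : (Real.pi : ℂ) * Complex.I / hbar = 3 * t := by
    rw [ht]; field_simp
  -- Q3 is quasi-periodic with period t
  have hQ3per : ∀ a, 1 ≤ a → a ≤ 2 → ∀ u, Q3 a (u + t) = hconst a * Q3 a u := by
    intro a ha1 ha2 u
    have hp := (hQper a ha1 ha2).2
    rw [hQ3, hQ3]
    have h3 : u + t + 2 * t = u + (Real.pi : ℂ) * Complex.I / hbar := by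
      rw [h3t]; ring
    have h2' : u + t + t = u + 2 * t := by ring
    rw [h3, hp, h2']
    ring
  -- A2 is t-periodic
  have hA2per : ∀ u, A2 (u + t) = A2 u := by
    intro u
    have p1 := hQ3per 1 le_rfl one_le_two
    have p2 := hQ3per 2 one_le_two le_rfl
    have e1 : u + t + 1 = u + 1 + t := by ring
    have e2 : u + t - 1 = u - 1 + t := by ring
    have e3 : u + t - 2 = u - 2 + t := by ring
    have e4 : u + t + 2 = u + 2 + t := by ring
    have h1 := (hQper 1 le_rfl one_le_two).1
    have h2 := (hQper 2 one_le_two le_rfl).1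
    rw [hA2, hA2, e1, e2, e3, e4, p1, p1, p2, p2,
      mul_div_mul_left _ _ h1, mul_div_mul_left _ _ h2]
  -- Sig2 difference equation
  have hSig : ∀ u, Sig2 (u + 2) = A2 (u + 1) * Sig2 u := by
    intro u
    have e1 : u + 2 + t = u + t + 2 := by ring
    have e2 : u + 2 + 2 * t = u + 2 * t + 2 := by ring
    have e3 : u + t + 1 = u + 1 + t := by ring
    have e4 : u + 2 * t + 1 = u + 1 + t + t := by ring
    rw [hSig2, hSig2, e1, e2, hS2, hS2, hS2, e3, e4]
    simp only [hA2per]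
    ring
  -- Y3 in terms of Q3
  have hY3Q1 : ∀ u, Y3 1 u = Q3 1 (u - 1) / Q3 1 (u + 1) := by
    intro u
    rw [hY3, hY, hY, hY, hQ3, hQ3, div_mul_div_comm, div_mul_div_comm,
      show u + t - 1 = u - 1 + t from by ring, show u + t + 1 = u + 1 + t from by ring,
      show u + 2 * t - 1 = u - 1 + 2 * t from by ring,
      show u + 2 * t + 1 = u + 1 + 2 * t from by ring]
  have hY3Q2 : ∀ u, Y3 2 u = Q3 2 (u - 1) / Q3 2 (u + 1) := by
    intro u
    rw [hY3, hY, hY, hY, hQ3, hQ3, div_mul_div_comm, div_mul_div_comm,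
      show u + t - 1 = u - 1 + t from by ring, show u + t + 1 = u + 1 + t from by ring,
      show u + 2 * t - 1 = u - 1 + 2 * t from by ring,
      show u + 2 * t + 1 = u + 1 + 2 * t from by ring]
  have hY31ne : ∀ u, Y3 1 u ≠ 0 := fun u => by
    rw [hY3Q1]; exact div_ne_zero (hQ31 _) (hQ31 _)
  have hY32ne : ∀ u, Y3 2 u ≠ 0 := fun u => by
    rw [hY3Q2]; exact div_ne_zero (hQ32 _) (hQ32 _)
  -- key algebraic identity
  have hkey : ∀ u, Y3 2 u = Y3 1 (u + 1) / Y3 2 (u + 2) * A2 (u + 1) := by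
    intro u
    rw [hY3Q1, hY3Q2, hY3Q2, hA2]
    have e1 : u + 1 - 1 = u := by ring
    have e2 : u + 1 + 1 = u + 2 := by ring
    have e3 : u + 2 - 1 = u + 1 := by ring
    have e4 : u + 2 + 1 = u + 3 := by ring
    have e5 : u + 1 - 2 = u - 1 := by ring
    have e6 : u + 1 + 2 = u + 3 := by ring
    rw [e1, e2, e3, e4, e5, e6]
    field_simp [hQ31, hQ32]
  have part1 : ∀ u : ℂ, Y3 2 u * Sig2 u = Y3 1 (u + 1) / Y3 2 (u + 2) * Sig2 (u + 2) := by
    intro u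
    rw [hSig, hkey u]
    ring
  refine ⟨part1, fun u => ?_⟩
  have h := part1 (u - 2)
  have e : u - 2 + 2 = u := by ring
  have e2 : u - 2 + 1 = u - 1 := by ring
  rw [e, e2] at h
  field_simp [hY31ne, hY32ne] at h ⊢
  linear_combination -h
end
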